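/- Combining the cases: for the function L_C on x₁,...,x_k, z (k ≥ 2) outputting 1 iff exactly one of x₁,...,x_k is 0 or (all x_i = 1 and z = 0), and any partial assignment p with no variable fixed to 0, if p is 'good' (z unfixed and exactly one x_i unfixed) then Pr[L_C = 1 on random completion] = 3/4, and if p is 'bad' (not good) then Pr[L_C = 1] ≤ 5/8. -/

import Mathlib

open Finset

/-- `L_C(x₁,...,x_k,z) = 1` iff exactly one of the `x i` is 0, or all `x i = 1` and `z = 0`. -/
def LC {k : ℕ} (x : Fin k → Bool) (z : Bool) : Bool :=
  decide ((univ.filter fun i => x i = false).card = 1) || (decide (∀ i, x i = true) && !z)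

lemma LC_count_eq (k : ℕ) (U : Finset (Fin k)) (zFixed : Bool)
    (P : Finset (Fin k) → Bool → Prop) [∀ S z, Decidable (P S z)] :
    (univ.filter fun p : (Fin k → Bool) × Bool =>
        ((∀ i ∉ U, p.1 i = true) ∧ (zFixed = true → p.2 = true)) ∧
          P (univ.filter fun i => p.1 i = false) p.2).card
      = ((U.powerset ×ˢ (if zFixed then ({true} : Finset Bool) else univ)).filter
          fun q => P q.1 q.2).card := by
  refine card_bij' (fun p _ => ((univ.filter fun i => p.1 i = false), p.2))
    (fun q _ => ((fun i => decide (i ∉ q.1)), q.2)) ?hi ?hj ?left ?right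
  case hi =>
    intro p hp
    simp only [mem_filter, mem_univ, true_and] at hp
    simp only [mem_filter, mem_product, mem_powerset]
    refine ⟨⟨?_, ?_⟩, hp.2⟩
    · intro i hi
      simp only [mem_filter, mem_univ, true_and] at hi
      by_contra hiU
      simp [hp.1.1 i hiU] at hi
    · cases zFixed with
      | false => simp
      | true => simp [hp.1.2 rfl]
  case hj =>
    intro q hq
    simp only [mem_filter, mem_product, mem_powerset] at hq
    simp only [mem_filter, mem_univ, true_and]
    constructor
    · constructor
      · intro i hiU
        simp only [decide_eq_true_eq]
        exact fun hiS => hiU (hq.1.1 hiS)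
      · intro hz
        rcases hq with ⟨⟨_, hz2⟩, _⟩
        rw [hz] at hz2
        simpa using hz2
    · have : (univ.filter fun i => (decide (i ∉ q.1)) = false) = q.1 := by
        ext i; simp
      rw [this]
      exact hq.2
  case left =>
    intro p hp
    refine Prod.ext ?_ rfl
    funext i
    simp only [mem_filter, mem_univ, true_and]
    cases h : p.1 i <;> simp [h]
  case right =>
    intro q hq
    refine Prod.ext ?_ rfl
    ext i; simp

lemma LC_succ_card (k : ℕ) (U : Finset (Fin k)) (zFixed : Bool) :
    ((U.powerset ×ˢ (if zFixed then ({true} : Finset Bool) else univ)).filter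
      fun q => q.1.card = 1 ∨ (q.1 = ∅ ∧ q.2 = false)).card
    = U.card * (if zFixed then 1 else 2) + (if zFixed then 0 else 1) := by
  set Z : Finset Bool := if zFixed then {true} else univ with hZ
  rw [filter_or, card_union_of_disjoint]
  · congr 1
    · have h1 : (U.powerset ×ˢ Z).filter (fun q => q.1.card = 1)
          = (U.powerset.filter fun S => S.card = 1) ×ˢ Z := by
        ext q
        simp only [mem_filter, mem_product]
        tauto
      rw [h1, card_product]
      congr 1
      · rw [← powersetCard_eq_filter, card_powersetCard, Nat.choose_one_right]
      · cases zFixed <;> simp [hZ]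
    · have h2 : (U.powerset ×ˢ Z).filter (fun q => q.1 = ∅ ∧ q.2 = false)
          = (U.powerset.filter fun S => S = ∅) ×ˢ (Z.filter fun z => z = false) := by
        ext q
        simp only [mem_filter, mem_product]
        tauto
      have h3 : (U.powerset.filter fun S => S = ∅) = {∅} := by
        ext S
        simp only [mem_filter, mem_powerset, mem_singleton]
        exact ⟨And.right, fun h => ⟨h ▸ empty_subset U, h⟩⟩
      rw [h2, card_product, h3, card_singleton, one_mul]
      cases zFixed <;> simp [hZ] <;> decide
  · simp only [disjoint_left, mem_filter]
    rintro q ⟨_, h1⟩ ⟨_, h2, _⟩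
    simp [h2] at h1

lemma LC_total_card (k : ℕ) (U : Finset (Fin k)) (zFixed : Bool) :
    ((U.powerset ×ˢ (if zFixed then ({true} : Finset Bool) else univ)).filter
      fun _q => True).card
    = 2 ^ U.card * (if zFixed then 1 else 2) := by
  rw [filter_true_of_mem (fun _ _ => trivial), card_product, card_powerset]
  cases zFixed <;> simp

lemma LC_nat_ineq1 (m : ℕ) : 8 * m ≤ 5 * 2 ^ m := by
  cases m with
  | zero => simp
  | succ n =>
    have h := Nat.lt_two_pow_self (n := n)
    have h2 : 5 * 2 ^ (n + 1) = 10 * 2 ^ n := by ring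
    omega

lemma LC_nat_ineq2 (m : ℕ) (hm : m ≠ 1) : 16 * m + 8 ≤ 10 * 2 ^ m := by
  match m, hm with
  | 0, _ => norm_num
  | (n+2), _ =>
    have h := Nat.lt_two_pow_self (n := n)
    have h2 : 10 * 2 ^ (n + 2) = 40 * 2 ^ n := by ring
    omega

lemma LC_iff {k : ℕ} (x : Fin k → Bool) (z : Bool) : (LC x z = true) ↔
    ((univ.filter fun i => x i = false).card = 1 ∨
      ((univ.filter fun i => x i = false) = ∅ ∧ z = false)) := by
  simp [LC, filter_eq_empty_iff]

/-- Lemma (cases).  Partial assignment: `x i` fixed to 1 for `i ∉ U` (unfixed for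
`i ∈ U`), `z` fixed to 1 if `zFixed` (otherwise unfixed); no variable fixed to 0.
If the assignment is good (`z` unfixed and exactly one `x i` unfixed) then the
success probability of `L_C` over a uniformly random completion is exactly `3/4`;
otherwise (bad) it is at most `5/8`. -/
theorem LC_cases (k : ℕ) (hk : 2 ≤ k) (U : Finset (Fin k)) (zFixed : Bool) :
    (zFixed = false ∧ U.card = 1 →
      ((univ.filter fun p : (Fin k → Bool) × Bool =>
          ((∀ i ∉ U, p.1 i = true) ∧ (zFixed = true → p.2 = true)) ∧ LC p.1 p.2 = true).card : ℝ) =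
        (3 / 4) * ((univ.filter fun p : (Fin k → Bool) × Bool =>
          (∀ i ∉ U, p.1 i = true) ∧ (zFixed = true → p.2 = true)).card : ℝ)) ∧
    (¬ (zFixed = false ∧ U.card = 1) →
      ((univ.filter fun p : (Fin k → Bool) × Bool =>
          ((∀ i ∉ U, p.1 i = true) ∧ (zFixed = true → p.2 = true)) ∧ LC p.1 p.2 = true).card : ℝ) ≤
        (5 / 8) * ((univ.filter fun p : (Fin k → Bool) × Bool =>
          (∀ i ∉ U, p.1 i = true) ∧ (zFixed = true → p.2 = true)).card : ℝ)) := by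
  have hsucc : (univ.filter fun p : (Fin k → Bool) × Bool =>
      ((∀ i ∉ U, p.1 i = true) ∧ (zFixed = true → p.2 = true)) ∧ LC p.1 p.2 = true).card
      = U.card * (if zFixed then 1 else 2) + (if zFixed then 0 else 1) := by
    have h1 : (univ.filter fun p : (Fin k → Bool) × Bool =>
        ((∀ i ∉ U, p.1 i = true) ∧ (zFixed = true → p.2 = true)) ∧ LC p.1 p.2 = true)
        = (univ.filter fun p : (Fin k → Bool) × Bool =>
          ((∀ i ∉ U, p.1 i = true) ∧ (zFixed = true → p.2 = true)) ∧
            ((univ.filter fun i => p.1 i = false).card = 1 ∨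
              ((univ.filter fun i => p.1 i = false) = ∅ ∧ p.2 = false))) := by
      apply filter_congr
      intro p _
      rw [LC_iff]
    rw [h1, LC_count_eq k U zFixed (fun S z => S.card = 1 ∨ (S = ∅ ∧ z = false)),
      LC_succ_card]
  have htot : (univ.filter fun p : (Fin k → Bool) × Bool =>
      (∀ i ∉ U, p.1 i = true) ∧ (zFixed = true → p.2 = true)).card
      = 2 ^ U.card * (if zFixed then 1 else 2) := by
    have h1 : (univ.filter fun p : (Fin k → Bool) × Bool =>
        (∀ i ∉ U, p.1 i = true) ∧ (zFixed = true → p.2 = true))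
        = (univ.filter fun p : (Fin k → Bool) × Bool =>
          ((∀ i ∉ U, p.1 i = true) ∧ (zFixed = true → p.2 = true)) ∧ True) := by
      apply filter_congr
      intro p _
      simp
    rw [h1, LC_count_eq k U zFixed (fun _ _ => True), LC_total_card]
  constructor
  · rintro ⟨hz, hU⟩
    subst hz
    rw [hsucc, htot, hU]
    norm_num
  · intro hbad
    rw [hsucc, htot]
    cases zFixed with
    | true =>
      simp only [if_true, mul_one, add_zero]
      have h := LC_nat_ineq1 U.card
      have h' : (8 : ℝ) * U.card ≤ 5 * 2 ^ U.card := by exact_mod_cast h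
      push_cast
      linarith
    | false =>
      have hU : U.card ≠ 1 := fun h => hbad ⟨rfl, h⟩
      simp only [Bool.false_eq_true, if_false]
      have h := LC_nat_ineq2 U.card hU
      have h' : (16 : ℝ) * U.card + 8 ≤ 10 * 2 ^ U.card := by exact_mod_cast h
      push_cast
      norm_num
      linarith
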